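/- arXiv:2004.14854 — 3 statements merged into one kernel-verified Lean document; each statement's English description precedes it below -/
import Mathlib

section
/- For O = S = 2, the number of equivalence classes of deterministic strategies of length L under relabeling of outcomes and of measurement settings equals (1/2)(4^{2^L − 2} + 4^{2^{L−1} − 1}). -/
/-!
Outcome flips and the setting exchange form a group of order 8 whose orbits are the classes,
so Burnside's lemma applies. A relabeling acts as `s ↦ φ ∘ s ∘ τ` with `τ` an involution of
the nodes, and a map with `φ ∘ t ∘ τ = t` takes `φ`-fixed values at the `τ`-fixed nodes and
is free, with values of period two under `φ`, on one node of every two-element `τ`-orbit.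
Without the exchange only the identity has fixed points (the root forbids a nontrivial flip):
`4 ^ (2 ^ L - 1)` of them. With the exchange the root is the only fixed node and the other
`2 ^ L - 2` nodes form `2 ^ (L - 1) - 1` pairs; only the two constant flips admit root tuples,
two each, giving `2 * 2 * 4 ^ (2 ^ (L - 1) - 1)` in total. Hence
`8 * #classes = 4 ^ (2 ^ L - 1) + 4 * 4 ^ (2 ^ (L - 1) - 1)`.
-/

/-- A node of the complete binary tree of depth `L-1`: an input history of
length `l < L`, inputs labelled by `ZMod 2`. -/
abbrev BinNode (L : ℕ) := (l : Fin L) × (Fin (l : ℕ) → ZMod 2)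

/-- A deterministic strategy for `O = S = 2`: each node carries a tuple in
`{0,1}^2`, settings and outcomes labelled by `ZMod 2`. -/
abbrev DetStrategy22 (L : ℕ) := BinNode L → (ZMod 2 → ZMod 2)

/-- Relabeling equivalence: `s'` is obtained from `s` by possibly exchanging
the two settings (`e = 1`: swap tuple components and tree branches
simultaneously) and flipping the outcomes of each setting uniformly at all
nodes (`c`). -/
def REquiv22 (L : ℕ) (s s' : DetStrategy22 L) : Prop :=
  ∃ (c : ZMod 2 → ZMod 2) (e : ZMod 2),
    ∀ (l : Fin L) (xs : Fin (l : ℕ) → ZMod 2) (i : ZMod 2),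
      s' ⟨l, xs⟩ i = s ⟨l, fun j => xs j + e⟩ (i + e) + c i

open Function

section Involution

variable {V Y : Type*} {τ : V → V} {p : V → Prop}

structure IsPairTransversal (τ : V → V) (p : V → Prop) : Prop where
  ne_of_mem : ∀ v, p v → τ v ≠ v
  mem_iff_not_mem : ∀ v, τ v ≠ v → (p (τ v) ↔ ¬ p v)

theorem apply_eq_of_invariant {φ : Y → Y} (hτ : Involutive τ) {t : V → Y}
    (ht : ∀ v, φ (t (τ v)) = t v) (v : V) : φ (t v) = t (τ v) := by
  simpa only [hτ v] using ht (τ v)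

namespace IsPairTransversal

variable (hp : IsPairTransversal τ p) (hτ : Involutive τ)
include hp hτ

open Classical in
noncomputable def equivSum : V ≃ {v // τ v = v} ⊕ ({v // p v} ⊕ {v // p v}) where
  toFun v :=
    if h : τ v = v then .inl ⟨v, h⟩
    else if hv : p v then .inr (.inl ⟨v, hv⟩)
    else .inr (.inr ⟨τ v, (hp.mem_iff_not_mem v h).2 hv⟩)
  invFun := Sum.elim Subtype.val (Sum.elim Subtype.val (τ ∘ Subtype.val))
  left_inv v := by
    by_cases h : τ v = v
    · simp [h]
    · by_cases hv : p v <;> simp [h, hv, hτ v]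
  right_inv := by
    rintro (⟨v, h⟩ | ⟨v, hv⟩ | ⟨v, hv⟩)
    · simp [h]
    · simp [hp.ne_of_mem v hv, hv]
    · have hnp : ¬ p (τ v) := fun h => (hp.mem_iff_not_mem v (hp.ne_of_mem v hv)).1 h hv
      simp [hnp, hτ v, Ne.symm (hp.ne_of_mem v hv)]

theorem equivSum_symm_map_swap (w : {v // τ v = v} ⊕ ({v // p v} ⊕ {v // p v})) :
    (hp.equivSum hτ).symm (Sum.map id Sum.swap w) = τ ((hp.equivSum hτ).symm w) := by
  rcases w with ⟨v, h⟩ | ⟨v, hv⟩ | ⟨v, hv⟩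
  · exact h.symm
  · rfl
  · exact (hτ v).symm

theorem natCard_eq [Finite V] :
    Nat.card V = Nat.card {v // τ v = v} + 2 * Nat.card {v // p v} := by
  rw [Nat.card_congr (hp.equivSum hτ), Nat.card_sum, Nat.card_sum, two_mul]

variable (φ : Y → Y)

noncomputable def extend (a : {v // τ v = v} → Y) (b : {v // p v} → Y) : V → Y :=
  Sum.elim a (Sum.elim b (φ ∘ b)) ∘ hp.equivSum hτ

theorem extend_symm_apply (a : {v // τ v = v} → Y) (b : {v // p v} → Y)
    (w : {v // τ v = v} ⊕ ({v // p v} ⊕ {v // p v})) :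
    hp.extend hτ φ a b ((hp.equivSum hτ).symm w) = Sum.elim a (Sum.elim b (φ ∘ b)) w := by
  rw [extend, comp_apply, Equiv.apply_symm_apply]

/-- On a free orbit `{v, τ v}` an invariant map is determined by `t v`, which can be any
point of period two under `φ`. -/
noncomputable def invariantMapsEquiv :
    {t : V → Y // ∀ v, φ (t (τ v)) = t v} ≃
      ({v // τ v = v} → {y // φ y = y}) × ({v // p v} → {y // φ (φ y) = y}) where
  toFun t :=
    (fun v => ⟨t.1 v, by simpa only [v.2] using t.2 v⟩,
     fun v => ⟨t.1 v, by rw [apply_eq_of_invariant hτ t.2, t.2 v]⟩)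
  invFun ab := ⟨hp.extend hτ φ (fun v => (ab.1 v).1) (fun v => (ab.2 v).1), by
    refine (hp.equivSum hτ).symm.surjective.forall.2 fun w => ?_
    rw [← hp.equivSum_symm_map_swap hτ, extend_symm_apply, extend_symm_apply]
    rcases w with v | v | v
    · exact (ab.1 v).2
    · exact (ab.2 v).2
    · rfl⟩
  left_inv t := by
    refine Subtype.ext <| funext <| (hp.equivSum hτ).symm.surjective.forall.2 fun w => ?_
    dsimp only
    rw [extend_symm_apply]
    rcases w with v | v | v
    · rfl
    · rfl
    · exact apply_eq_of_invariant hτ t.2 v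
  right_inv ab := by
    ext v
    · exact hp.extend_symm_apply hτ φ _ _ (Sum.inl v)
    · exact hp.extend_symm_apply hτ φ _ _ (Sum.inr (Sum.inl v))

theorem natCard_invariantMaps [Finite V] :
    Nat.card {t : V → Y // ∀ v, φ (t (τ v)) = t v} =
      Nat.card {y // φ y = y} ^ Nat.card {v // τ v = v} *
        Nat.card {y // φ (φ y) = y} ^ Nat.card {v // p v} := by
  rw [Nat.card_congr (hp.invariantMapsEquiv hτ φ), Nat.card_prod, Nat.card_fun, Nat.card_fun]

end IsPairTransversal
end Involution

open MulAction

theorem MulAction.sum_natCard_fixedBy_eq_natCard_orbits_mul_natCard_group (G X : Type*) [Group G]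
    [MulAction G X] [Fintype G] [Finite X] :
    ∑ g : G, Nat.card (fixedBy X g) = Nat.card (orbitRel.Quotient G X) * Nat.card G := by
  rw [← Nat.card_sigma, ← Nat.card_prod, Nat.card_congr (sigmaFixedByEquivOrbitsProdGroup G X)]

namespace BinNode

variable {L : ℕ}

def addInputs (e : ZMod 2) (n : BinNode L) : BinNode L := ⟨n.1, fun j => n.2 j + e⟩

theorem addInputs_add (e e' : ZMod 2) (n : BinNode L) :
    addInputs (e + e') n = addInputs e' (addInputs e n) := by
  simp [addInputs, add_assoc]

theorem addInputs_zero (n : BinNode L) : addInputs 0 n = n := by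
  simp [addInputs]

theorem involutive_addInputs (e : ZMod 2) : Involutive (addInputs (L := L) e) := fun n => by
  rw [← addInputs_add, CharTwo.add_self_eq_zero, addInputs_zero]

theorem addInputs_eq_self_iff (e : ZMod 2) (n : BinNode L) :
    addInputs e n = n ↔ ∀ j, n.2 j + e = n.2 j := by
  rw [addInputs, ← funext_iff]
  exact sigma_mk_injective.eq_iff

theorem natCard_eq (L : ℕ) : Nat.card (BinNode L) = 2 ^ L - 1 := by
  simp [Fin.sum_univ_eq_sum_range, Nat.geomSum_eq le_rfl]

theorem addInputs_one_eq_self_iff (n : BinNode L) : addInputs 1 n = n ↔ (n.1 : ℕ) = 0 := by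
  rw [addInputs_eq_self_iff]
  refine ⟨fun h => Nat.eq_zero_of_not_pos fun hl => ?_, fun h j => absurd j.2 (by omega)⟩
  simpa using h ⟨0, hl⟩

theorem natCard_fixed_addInputs_one (hL : 1 ≤ L) :
    Nat.card {n : BinNode L // addInputs 1 n = n} = 1 := by
  rw [Nat.card_eq_one_iff_exists]
  refine ⟨⟨⟨⟨0, hL⟩, Fin.elim0⟩, (addInputs_one_eq_self_iff _).2 rfl⟩, ?_⟩
  rintro ⟨⟨⟨l, hl⟩, xs⟩, h⟩
  obtain rfl : l = 0 := (addInputs_one_eq_self_iff _).1 h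
  congr
  exact Subsingleton.elim _ _

def FirstInputZero (n : BinNode L) : Prop := ∃ h : 0 < (n.1 : ℕ), n.2 ⟨0, h⟩ = 0

theorem isPairTransversal_addInputs_zero :
    IsPairTransversal (addInputs (L := L) 0) fun _ => False :=
  ⟨fun _ h => h.elim, fun n h => absurd (addInputs_zero n) h⟩

theorem isPairTransversal_firstInputZero :
    IsPairTransversal (addInputs (L := L) 1) FirstInputZero where
  ne_of_mem n := by
    rintro ⟨hl, -⟩ h
    exact hl.ne' ((addInputs_one_eq_self_iff n).1 h)
  mem_iff_not_mem n h := by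
    have hl : 0 < (n.1 : ℕ) := Nat.pos_of_ne_zero fun h0 => h ((addInputs_one_eq_self_iff n).2 h0)
    have : ∀ x : ZMod 2, x + 1 = 0 ↔ ¬ x = 0 := by decide
    simpa [FirstInputZero, addInputs, hl] using this (n.2 ⟨0, hl⟩)

end BinNode

@[ext] structure Relabeling where
  flip : ZMod 2 → ZMod 2
  swap : ZMod 2

namespace Relabeling

def equivProd : Relabeling ≃ (ZMod 2 → ZMod 2) × ZMod 2 where
  toFun g := (g.flip, g.swap)
  invFun p := ⟨p.1, p.2⟩

instance : Fintype Relabeling := Fintype.ofEquiv _ equivProd.symm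

/-- The product is composition: `relabelTuple (g * h) = relabelTuple g ∘ relabelTuple h`. -/
instance : Mul Relabeling :=
  ⟨fun g h => ⟨fun i => h.flip (i + g.swap) + g.flip i, g.swap + h.swap⟩⟩
instance : One Relabeling := ⟨⟨0, 0⟩⟩
instance : Inv Relabeling := ⟨fun g => ⟨fun i => g.flip (i + g.swap), g.swap⟩⟩

theorem mul_flip (g h : Relabeling) : (g * h).flip = fun i => h.flip (i + g.swap) + g.flip i := rfl
theorem mul_swap (g h : Relabeling) : (g * h).swap = g.swap + h.swap := rfl
theorem one_flip : (1 : Relabeling).flip = 0 := rfl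
theorem one_swap : (1 : Relabeling).swap = 0 := rfl
theorem inv_flip (g : Relabeling) : g⁻¹.flip = fun i => g.flip (i + g.swap) := rfl
theorem inv_swap (g : Relabeling) : g⁻¹.swap = g.swap := rfl

instance : Group Relabeling :=
  Group.ofLeftAxioms
    (fun g h k => by ext <;> simp only [mul_flip, mul_swap, add_assoc])
    (fun g => by ext <;> simp [mul_flip, mul_swap, one_flip, one_swap])
    (fun g => by
      ext <;> simp [mul_flip, mul_swap, one_flip, one_swap, inv_flip, inv_swap,
        CharTwo.add_self_eq_zero])

def relabelTuple (g : Relabeling) (f : ZMod 2 → ZMod 2) (i : ZMod 2) : ZMod 2 :=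
  f (i + g.swap) + g.flip i

theorem relabelTuple_one (f : ZMod 2 → ZMod 2) : relabelTuple 1 f = f := by
  ext; simp [relabelTuple, one_flip, one_swap]

theorem relabelTuple_mul (g h : Relabeling) (f : ZMod 2 → ZMod 2) :
    relabelTuple (g * h) f = relabelTuple g (relabelTuple h f) := by
  ext; simp only [relabelTuple, mul_flip, mul_swap, add_assoc]

variable {L : ℕ}

instance : SMul Relabeling (DetStrategy22 L) :=
  ⟨fun g s => relabelTuple g ∘ s ∘ BinNode.addInputs g.swap⟩

theorem smul_apply (g : Relabeling) (s : DetStrategy22 L) (n : BinNode L) :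
    (g • s) n = relabelTuple g (s (BinNode.addInputs g.swap n)) := rfl

instance : MulAction Relabeling (DetStrategy22 L) where
  one_smul s := funext fun n => by
    rw [smul_apply, one_swap, BinNode.addInputs_zero, relabelTuple_one]
  mul_smul g h s := funext fun n => by
    rw [smul_apply, smul_apply, smul_apply, mul_swap, BinNode.addInputs_add, relabelTuple_mul]

theorem rEquiv22_iff (s s' : DetStrategy22 L) :
    REquiv22 L s s' ↔ ∃ g : Relabeling, g • s = s' := by
  constructor
  · rintro ⟨c, e, h⟩
    exact ⟨⟨c, e⟩, funext fun n => funext fun i => (h n.1 n.2 i).symm⟩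
  · rintro ⟨g, rfl⟩
    exact ⟨g.flip, g.swap, fun l xs i => rfl⟩

theorem rEquiv22_iff_orbitRel (s s' : DetStrategy22 L) :
    REquiv22 L s s' ↔ orbitRel Relabeling (DetStrategy22 L) s s' := by
  rw [rEquiv22_iff, orbitRel_apply, mem_orbit_symm, mem_orbit_iff]

def quotEquivOrbits : Quot (REquiv22 L) ≃ orbitRel.Quotient Relabeling (DetStrategy22 L) :=
  Quot.congrRight rEquiv22_iff_orbitRel

theorem natCard_fixedBy (g : Relabeling) {p : BinNode L → Prop}
    (hp : IsPairTransversal (BinNode.addInputs g.swap) p) :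
    Nat.card (fixedBy (DetStrategy22 L) g) =
      Nat.card {f // relabelTuple g f = f} ^
          Nat.card {n : BinNode L // BinNode.addInputs g.swap n = n} *
        Nat.card {f // relabelTuple g (relabelTuple g f) = f} ^ Nat.card {n // p n} := by
  rw [← hp.natCard_invariantMaps (BinNode.involutive_addInputs _)]
  exact Nat.card_congr (Equiv.subtypeEquivRight fun s => mem_fixedBy.trans funext_iff)

theorem natCard_eq : Nat.card Relabeling = 8 := by
  rw [Nat.card_congr equivProd, Nat.card_prod, Nat.card_fun]
  simp

theorem natCard_fixed_relabelTuple_swap_zero (c : ZMod 2 → ZMod 2) :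
    Nat.card {f // relabelTuple ⟨c, 0⟩ f = f} = if c = 0 then 4 else 0 := by
  rw [Nat.card_eq_fintype_card]
  revert c
  decide

theorem sum_natCard_fixed_relabelTuple_swap_one :
    ∑ c, Nat.card {f // relabelTuple ⟨c, 1⟩ f = f} = 4 := by
  simp only [Nat.card_eq_fintype_card]
  decide

/-- If `⟨c, 1⟩` fixes some tuple then `c` is constant, so `relabelTuple ⟨c, 1⟩` is
an involution. -/
theorem natCard_fixed_relabelTuple_sq_swap_one (c : ZMod 2 → ZMod 2)
    (h : Nat.card {f // relabelTuple ⟨c, 1⟩ f = f} ≠ 0) :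
    Nat.card {f // relabelTuple ⟨c, 1⟩ (relabelTuple ⟨c, 1⟩ f) = f} = 4 := by
  rw [Nat.card_eq_fintype_card] at h ⊢
  revert c
  decide

theorem sum_natCard_fixedBy_swap_zero (hL : 1 ≤ L) :
    ∑ c, Nat.card (fixedBy (DetStrategy22 L) (⟨c, 0⟩ : Relabeling)) = 4 ^ (2 ^ L - 1) := by
  have hfix : Nat.card {n : BinNode L // BinNode.addInputs 0 n = n} = 2 ^ L - 1 := by
    rw [Nat.card_congr (Equiv.subtypeUnivEquiv BinNode.addInputs_zero), BinNode.natCard_eq]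
  have hpos : 2 ^ L - 1 ≠ 0 := by
    have := Nat.one_lt_two_pow_iff.2 (by omega : L ≠ 0)
    omega
  calc ∑ c, Nat.card (fixedBy (DetStrategy22 L) (⟨c, 0⟩ : Relabeling))
      = ∑ c : ZMod 2 → ZMod 2, (if c = 0 then 4 else 0) ^ (2 ^ L - 1) := by
        refine Finset.sum_congr rfl fun c _ => ?_
        rw [natCard_fixedBy _ BinNode.isPairTransversal_addInputs_zero, hfix,
          natCard_fixed_relabelTuple_swap_zero]
        simp
    _ = 4 ^ (2 ^ L - 1) := by simp [ite_pow, zero_pow hpos]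

theorem sum_natCard_fixedBy_swap_one (hL : 1 ≤ L) :
    ∑ c, Nat.card (fixedBy (DetStrategy22 L) (⟨c, 1⟩ : Relabeling)) =
      4 * 4 ^ (2 ^ (L - 1) - 1) := by
  have hH : Nat.card {n : BinNode L // BinNode.FirstInputZero n} = 2 ^ (L - 1) - 1 := by
    have := BinNode.isPairTransversal_firstInputZero.natCard_eq
      (BinNode.involutive_addInputs (L := L) 1)
    rw [BinNode.natCard_eq, BinNode.natCard_fixed_addInputs_one hL] at this
    have h2 : 2 ^ L = 2 * 2 ^ (L - 1) := by rw [← pow_succ']; congr 1; omega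
    omega
  calc ∑ c, Nat.card (fixedBy (DetStrategy22 L) (⟨c, 1⟩ : Relabeling))
      = ∑ c, Nat.card {f // relabelTuple ⟨c, 1⟩ f = f} * 4 ^ (2 ^ (L - 1) - 1) := by
        refine Finset.sum_congr rfl fun c _ => ?_
        rw [natCard_fixedBy _ BinNode.isPairTransversal_firstInputZero,
          BinNode.natCard_fixed_addInputs_one hL, hH, pow_one]
        by_cases h : Nat.card {f // relabelTuple ⟨c, 1⟩ f = f} = 0
        · rw [h, zero_mul, zero_mul]
        · rw [natCard_fixed_relabelTuple_sq_swap_one c h]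
    _ = 4 * 4 ^ (2 ^ (L - 1) - 1) := by
        rw [← Finset.sum_mul, sum_natCard_fixed_relabelTuple_swap_one]

theorem sum_natCard_fixedBy (hL : 1 ≤ L) :
    ∑ g : Relabeling, Nat.card (fixedBy (DetStrategy22 L) g) =
      4 ^ (2 ^ L - 1) + 4 * 4 ^ (2 ^ (L - 1) - 1) := by
  rw [← equivProd.symm.sum_comp, Fintype.sum_prod_type_right,
    show (Finset.univ : Finset (ZMod 2)) = {0, 1} from rfl, Finset.sum_pair zero_ne_one]
  exact congrArg₂ (· + ·) (sum_natCard_fixedBy_swap_zero hL) (sum_natCard_fixedBy_swap_one hL)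

end Relabeling

/-- For `O = S = 2`, the number of equivalence classes of deterministic
strategies of length `L` under relabeling of outcomes and of measurement
settings equals `(1/2)(4^(2^L - 2) + 4^(2^(L-1) - 1))`. -/
theorem card_RE_classes_22 (L : ℕ) (hL : 1 ≤ L) :
    2 * Nat.card (Quot (REquiv22 L)) =
      4 ^ (2 ^ L - 2) + 4 ^ (2 ^ (L - 1) - 1) := by
  have burnside := sum_natCard_fixedBy_eq_natCard_orbits_mul_natCard_group Relabeling
    (DetStrategy22 L)
  rw [Relabeling.sum_natCard_fixedBy hL, ← Nat.card_congr Relabeling.quotEquivOrbits,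
    Relabeling.natCard_eq] at burnside
  have h4 : 4 ^ (2 ^ L - 1) = 4 * 4 ^ (2 ^ L - 2) := by
    rw [← pow_succ']
    have := Nat.one_lt_two_pow_iff.2 (by omega : L ≠ 0)
    congr 1
    omega
  omega
end

section
/- For all x ≥ e, the principal branch of the Lambert W function satisfies W(x) ≥ ln(x) − ln(ln(x)) + ln(ln(x))/(2·ln(x)). -/
/-!
Since `y ↦ y e^y` is increasing on `[0, ∞)`, it suffices to show that
`c = L - log L + t`, with `L = log x` and `t = log L / (2 L)`, satisfies `c e^c ≤ x = e^L`.
Writing `e^c = e^L e^t / L`, this reduces to `c ≤ L e^{-t}`, which follows from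
`e^{-t} ≥ 1 - t` because `L t = log L / 2` and `t ≤ log L / 2`.
-/

open Real

namespace Real

theorem le_of_mul_exp_le_mul_exp {c y : ℝ} (hy : 0 ≤ y) (h : c * exp c ≤ y * exp y) :
    c ≤ y := by
  by_contra! hyc
  have : y * exp y < c * exp c :=
    mul_lt_mul hyc (exp_le_exp.2 hyc.le) (exp_pos y) (hy.trans hyc.le)
  linarith

theorem log_div_two_mul_le_half_log {L : ℝ} (hL : 0 < L) : log L / (2 * L) ≤ log L / 2 := by
  have hsign : 0 ≤ (L - 1) * log L := by
    rcases le_total 1 L with h | h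
    · exact mul_nonneg (by linarith) (log_nonneg h)
    · exact mul_nonneg_of_nonpos_of_nonpos (by linarith) (log_nonpos hL.le h)
  rw [div_le_div_iff₀ (by positivity) two_pos]
  nlinarith

theorem sub_log_add_le_mul_exp_neg {L : ℝ} (hL : 0 < L) :
    L - log L + log L / (2 * L) ≤ L * exp (-(log L / (2 * L))) := by
  set t := log L / (2 * L)
  have hLt : L * t = log L / 2 := by simp only [t]; field_simp
  calc L - log L + t ≤ L * (1 - t) := by
        linarith [log_div_two_mul_le_half_log hL]
    _ ≤ L * exp (-t) := mul_le_mul_of_nonneg_left (one_sub_le_exp_neg t) hL.le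

theorem mul_exp_le_exp_of_eq_sub_log_add {L c : ℝ} (hL : 0 < L)
    (hc : c = L - log L + log L / (2 * L)) : c * exp c ≤ exp L := by
  calc c * exp c ≤ L * exp (-(log L / (2 * L))) * exp c :=
        mul_le_mul_of_nonneg_right (hc ▸ sub_log_add_le_mul_exp_neg hL) (exp_pos c).le
    _ = exp (log L + -(log L / (2 * L)) + c) := by
        rw [exp_add _ c, exp_add, exp_log hL]
    _ = exp L := by rw [hc]; ring_nf

end Real

/-- Hoorfar–Hassani lower bound on the principal branch of the Lambert W
function: for all `x ≥ e`,
`W(x) ≥ ln x - ln (ln x) + ln (ln x) / (2 ln x)`. Here `y = W(x)` is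
characterized as the unique `y > 0` with `y * exp y = x`. -/
theorem lambertW_lower_bound (x y : ℝ) (hx : Real.exp 1 ≤ x)
    (hy : 0 < y) (hxy : y * Real.exp y = x) :
    Real.log x - Real.log (Real.log x) +
      Real.log (Real.log x) / (2 * Real.log x) ≤ y := by
  have hx0 : 0 < x := (exp_pos 1).trans_le hx
  have hlog : 0 < log x := log_pos ((one_lt_exp_iff.2 one_pos).trans_le hx)
  apply le_of_mul_exp_le_mul_exp hy.le
  rw [hxy]
  simpa only [exp_log hx0] using mul_exp_le_exp_of_eq_sub_log_add hlog rfl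
end

section
/- Suppose for each j = 1,...,n and each branch i the probability expression B_{k_j^i} (a sum over input sequences of probabilities of a fixed deterministic output assignment of length L) is bounded by C_{k_j^i} for correlations realizable in dimension d, and the correlations satisfy the factorization p(a_1...a_{nL}|x_1...x_{nL}) = ∏_{j=1}^n p(a_{(j−1)L+1}...a_{jL} | past; x_1...x_{jL}) with each conditional block bounded by C_j := max_i C_{k_j^i}. Then the concatenated expression B_k := ∑_{x_1,...,x_{nL}} p(ã_1[x_1], ..., ã_{nL}[x_1,...,x_{nL}] | x_1,...,x_{nL}) satisfies B_k ≤ ∏_{j=1}^n C_j. -/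
/-!
Sum out the blocks from the last one backwards. By causality only the last factor of
`∏ j, q j x` depends on the last block, so summing over that block costs a factor of at most
`C (last n)` and leaves the same kind of sum for the first `n` blocks, with the last block
frozen at an arbitrary value.
-/

open Finset

theorem Fin.snoc_eq_snoc_of_le_castSucc {α : Type*} {n : ℕ} {x x' : Fin n → α} {y y' : α}
    {j : Fin n} (h : ∀ j' ≤ j, x j' = x' j') :
    ∀ j' ≤ j.castSucc, Fin.snoc (α := fun _ => α) x y j' = Fin.snoc (α := fun _ => α) x' y' j' := by
  intro j' hj'
  obtain ⟨i, rfl⟩ : ∃ i : Fin n, i.castSucc = j' :=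
    Fin.exists_castSucc_eq.mpr (Fin.ne_last_of_lt (hj'.trans_lt (Fin.castSucc_lt_last j)))
  simpa only [Fin.snoc_castSucc] using h i (Fin.castSucc_le_castSucc_iff.mp hj')

section Causal

variable {α : Type*} {n : ℕ}

def IsCausal (q : Fin n → (Fin n → α) → ℝ) : Prop :=
  ∀ (j : Fin n) (x x' : Fin n → α), (∀ j' ≤ j, x j' = x' j') → q j x = q j x'

namespace IsCausal

variable {q : Fin (n + 1) → (Fin (n + 1) → α) → ℝ}

theorem apply_castSucc_snoc (hq : IsCausal q) (j : Fin n) (x : Fin n → α) (y y' : α) :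
    q j.castSucc (Fin.snoc x y) = q j.castSucc (Fin.snoc x y') :=
  hq _ _ _ (Fin.snoc_eq_snoc_of_le_castSucc fun _ _ => rfl)

theorem castSucc_snoc (hq : IsCausal q) (a : α) :
    IsCausal fun (j : Fin n) x => q j.castSucc (Fin.snoc x a) :=
  fun _ _ _ h => hq _ _ _ (Fin.snoc_eq_snoc_of_le_castSucc h)

end IsCausal

theorem sum_prod_le_prod_of_isCausal [Fintype α] [Nonempty α]
    (q : Fin n → (Fin n → α) → ℝ) (C : Fin n → ℝ) (hnonneg : ∀ j x, 0 ≤ q j x)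
    (hq : IsCausal q) (hblock : ∀ j x, ∑ y, q j (Function.update x j y) ≤ C j) :
    ∑ x, ∏ j, q j x ≤ ∏ j, C j := by
  induction n with
  | zero => simp
  | succ n ih =>
    obtain ⟨a⟩ := ‹Nonempty α›
    set q' : Fin n → (Fin n → α) → ℝ := fun j x => q j.castSucc (Fin.snoc x a)
    have hsplit : ∀ x y, ∏ j, q j (Fin.snoc x y) = (∏ j, q' j x) * q (Fin.last n) (Fin.snoc x y) :=
      fun x y => by
        rw [Fin.prod_univ_castSucc]
        exact congrArg (· * _) (prod_congr rfl fun j _ => hq.apply_castSucc_snoc j x y a)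
    have hlast : ∀ x, ∑ y, q (Fin.last n) (Fin.snoc x y) ≤ C (Fin.last n) := fun x => by
      simpa only [Fin.update_snoc_last] using hblock (Fin.last n) (Fin.snoc x a)
    have hC : 0 ≤ C (Fin.last n) :=
      (sum_nonneg fun _ _ => hnonneg _ _).trans (hlast fun _ => a)
    have hinit : ∑ x, ∏ j, q' j x ≤ ∏ j : Fin n, C j.castSucc :=
      ih q' (fun j => C j.castSucc) (fun _ _ => hnonneg _ _) (hq.castSucc_snoc a) fun j x => by
        simpa only [q', Fin.snoc_update] using hblock j.castSucc (Fin.snoc x a)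
    calc ∑ x, ∏ j, q j x = ∑ x : Fin n → α, ∑ y, ∏ j, q j (Fin.snoc x y) := by
          rw [← Fintype.sum_equiv (Fin.snocEquiv fun _ => α) (fun p => ∏ j, q j (Fin.snoc p.2 p.1)) _
            fun _ => rfl, Fintype.sum_prod_type_right]
      _ = ∑ x, (∏ j, q' j x) * ∑ y, q (Fin.last n) (Fin.snoc x y) := by
          simp only [hsplit, mul_sum]
      _ ≤ ∑ x, (∏ j, q' j x) * C (Fin.last n) := by
          gcongr with x
          · exact prod_nonneg fun _ _ => hnonneg _ _
          · exact hlast x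
      _ = (∑ x, ∏ j, q' j x) * C (Fin.last n) := (sum_mul ..).symm
      _ ≤ (∏ j : Fin n, C j.castSucc) * C (Fin.last n) := by gcongr
      _ = ∏ j, C j := (Fin.prod_univ_castSucc C).symm

end Causal

theorem concatenated_temporal_inequality_general (n L S : ℕ) (hS : 1 ≤ S)
    (q : Fin n → (Fin n → (Fin L → Fin S)) → ℝ) (C : Fin n → ℝ)
    (hnonneg : ∀ j x, 0 ≤ q j x)
    (hdep : ∀ (j : Fin n) (x x' : Fin n → (Fin L → Fin S)),
      (∀ j' : Fin n, j' ≤ j → x j' = x' j') → q j x = q j x')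
    (hblock : ∀ (j : Fin n) (x : Fin n → (Fin L → Fin S)),
      ∑ y : Fin L → Fin S, q j (Function.update x j y) ≤ C j) :
    ∑ x : Fin n → (Fin L → Fin S), ∏ j : Fin n, q j x ≤ ∏ j : Fin n, C j := by
  have : Nonempty (Fin S) := ⟨⟨0, hS⟩⟩
  exact sum_prod_le_prod_of_isCausal q C hnonneg hdep hblock

/-- Concatenation of temporal inequalities. An input sequence of length `n·L`
is modelled as `n` blocks of `L` inputs, `x : Fin n → Fin L → Fin S`.
For each block `j`, `q j x` is the conditional probability (given the past)
of the prescribed deterministic outputs of block `j` on inputs `x`; by the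
arrow-of-time factorization, the probability of the full prescribed output
sequence is `∏ j, q j x`. Assume:
* each `q j x` is nonnegative;
* `q j x` depends only on the inputs of blocks `≤ j`;
* block bound: for every `j` and every choice of the other blocks, the sum
  over the `S^L` input sequences of block `j` satisfies
  `∑_y q j (x[j := y]) ≤ C j`.
Then the concatenated expression
`B = ∑_x p(ã₁[x₁],…,ã_{nL}[x₁,…,x_{nL}] | x₁,…,x_{nL}) = ∑_x ∏ j, q j x`
satisfies `B ≤ ∏ j, C j`. -/
theorem concatenated_temporal_inequality (n L S : ℕ) (hL : 1 ≤ L) (hS : 1 ≤ S)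
    (q : Fin n → (Fin n → (Fin L → Fin S)) → ℝ) (C : Fin n → ℝ)
    (hnonneg : ∀ j x, 0 ≤ q j x)
    (hdep : ∀ (j : Fin n) (x x' : Fin n → (Fin L → Fin S)),
      (∀ j' : Fin n, j' ≤ j → x j' = x' j') → q j x = q j x')
    (hblock : ∀ (j : Fin n) (x : Fin n → (Fin L → Fin S)),
      ∑ y : Fin L → Fin S, q j (Function.update x j y) ≤ C j) :
    ∑ x : Fin n → (Fin L → Fin S), ∏ j : Fin n, q j x ≤ ∏ j : Fin n, C j :=
  concatenated_temporal_inequality_general n L S hS q C hnonneg hdep hblock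
end
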